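/- arXiv:1512.05036 — 10 statements merged into one kernel-verified Lean document; each statement's English description precedes it below -/
import Mathlib

section
/- Let (A, <) be a strict well-order with a strictly monotone system of cofinal sequences s having the Bachmann property. Suppose b < a and p ∈ Path^s_a is a path code with ρ^s_a(p) = b. Then for all natural numbers x ≥ |p| we have F^s_a(x) ≥ F^s_b(x). -/
/-- `x` is a nonzero limit point of the linear order `A`: it is not the least
element and it is the supremum of the elements strictly below it. -/
def IsLimPt {A : Type*} [LinearOrder A] (x : A) : Prop :=
  (∃ y, y < x) ∧ ∀ y < x, ∃ z, y < z ∧ z < x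

/-- `s` is a system of cofinal sequences: at every nonzero limit point `x`,
the values `s x n` are strictly below `x` and their supremum is `x`. -/
def IsCofSys {A : Type*} [LinearOrder A] (s : A → ℕ → A) : Prop :=
  ∀ x, IsLimPt x → (∀ n : ℕ, s x n < x) ∧ (∀ y < x, ∃ n : ℕ, y < s x n)

/-- The system of cofinal sequences `s` is strictly monotone. -/
def IsStrictMonoCofSys {A : Type*} [LinearOrder A] (s : A → ℕ → A) : Prop :=
  ∀ x, IsLimPt x → ∀ n m : ℕ, n < m → s x n < s x m

/-- The Bachmann property for a system of cofinal sequences `s`. -/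
def HasBachmann {A : Type*} [LinearOrder A] (s : A → ℕ → A) : Prop :=
  ∀ x y, IsLimPt x → IsLimPt y → ∀ n : ℕ,
    s x n < y → y ≤ s x (n + 1) → s x n ≤ s y 0

/-- `PathRho s a p v` means that `p` is a path code from `a` (for the system of
cofinal sequences `s`) and the corresponding path ends at `v`
(i.e. `p ∈ Path^s_a` and `ρ^s_a(p) = v`). -/
inductive PathRho {A : Type*} [LinearOrder A] (s : A → ℕ → A) (a : A) : List ℕ → A → Prop
  | nil : PathRho s a [] a
  | lim (p : List ℕ) (v : A) (m : ℕ) :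
      PathRho s a p v → IsLimPt v → 1 ≤ m → PathRho s a (p ++ [m]) (s v (m - 1))
  | succ (p : List ℕ) (v b : A) :
      PathRho s a p v → b ⋖ v → PathRho s a (p ++ [0]) b

/-- The norm `|p|` of a path code `p = (n_1, …, n_k)` is `n_1 + … + n_k + k`. -/
def pathLen (p : List ℕ) : ℕ := p.sum + p.length

/-- `F` is the fast-growing hierarchy based on the well-order `A` with the
system of cofinal sequences `s`. -/
def IsFGH {A : Type*} [LinearOrder A] (s : A → ℕ → A) (F : A → ℕ → ℕ) : Prop :=
  (∀ a : A, IsMin a → ∀ x : ℕ, F a x = x + 1) ∧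
  (∀ a b : A, b ⋖ a → ∀ x : ℕ, F a x = (F b)^[x] x) ∧
  (∀ a : A, IsLimPt a → ∀ x : ℕ, F a x = F (s a x) x)

/-- The one-step step-down relation: `b` is related to `a` when `a` is the
immediate successor of `b`, or when `a` is a nonzero limit point and `b = s a 0`. -/
def StepDown {A : Type*} [LinearOrder A] (s : A → ℕ → A) (b a : A) : Prop :=
  b ⋖ a ∨ (IsLimPt a ∧ b = s a 0)

/-!
The Bachmann property says that `s a (n + 1)` is reached from `s a n` by a chain of `StepDown`
steps. By well-founded induction, `F · x` is monotone along such chains once `x ≥ 1`: across a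
successor step this is `F c x ≤ (F c)^[x] x`, and across a limit step `F a x = F (s a x) x`
dominates `F (s a 0) x` because the chain from `s a 0` to `s a x` lies below `a`. An entry `m` of
the path code is paid for by `x ≥ |p|`, so `m - 1 ≤ x`, and the edge from `v` to `s v (m - 1)` is
dominated through the chain from `s v (m - 1)` to `s v x`.
-/

open Relation

section LinearOrder

variable {A : Type*} [LinearOrder A] {s : A → ℕ → A}

lemma isMin_or_exists_covBy_or_isLimPt (a : A) : IsMin a ∨ (∃ b, b ⋖ a) ∨ IsLimPt a := by
  by_cases hmin : IsMin a
  · exact Or.inl hmin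
  obtain ⟨y, hy⟩ := not_isMin_iff.mp hmin
  by_cases hcov : ∃ b, b ⋖ a
  · exact Or.inr (Or.inl hcov)
  refine Or.inr (Or.inr ⟨⟨y, hy⟩, fun z hz => ?_⟩)
  by_contra! hgap
  exact hcov ⟨z, hz, fun w hzw hwa => (hgap w hzw).not_gt hwa⟩

lemma StepDown.lt (hcof : IsCofSys s) {a b : A} (h : StepDown s b a) : b < a := by
  rcases h with h | ⟨ha, rfl⟩
  · exact h.lt
  · exact (hcof a ha).1 0

lemma pathLen_append_singleton (p : List ℕ) (m : ℕ) :
    pathLen (p ++ [m]) = pathLen p + m + 1 := by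
  simp only [pathLen, List.sum_append, List.sum_singleton, List.length_append,
    List.length_singleton]
  omega

end LinearOrder

section WellOrder

variable {A : Type*} [LinearOrder A] [WellFoundedLT A] {s : A → ℕ → A}

lemma IsFGH.le_apply (hcof : IsCofSys s) {F : A → ℕ → ℕ} (hF : IsFGH s F) (a : A) (x : ℕ) :
    x ≤ F a x := by
  induction a using WellFoundedLT.induction generalizing x with
  | _ a ih =>
  rcases isMin_or_exists_covBy_or_isLimPt a with ha | ⟨b, hba⟩ | ha
  · rw [hF.1 a ha x]
    exact x.le_succ
  · rw [hF.2.1 a b hba x]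
    exact Function.id_le_iterate_of_id_le (ih b hba.lt) x x
  · rw [hF.2.2 a ha x]
    exact ih _ ((hcof a ha).1 x) x

lemma reflTransGen_stepDown_of_lt_of_le (hcof : IsCofSys s) (hbach : HasBachmann s) {a : A}
    (ha : IsLimPt a) {n : ℕ} {y : A} (hlt : s a n < y) (hle : y ≤ s a (n + 1)) :
    ReflTransGen (StepDown s) (s a n) y := by
  induction y using WellFoundedLT.induction with
  | _ y ih =>
  obtain ⟨c, hcy, hc⟩ : ∃ c, StepDown s c y ∧ s a n ≤ c := by
    rcases isMin_or_exists_covBy_or_isLimPt y with hy | ⟨c, hcy⟩ | hy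
    · exact absurd (hy hlt.le) hlt.not_ge
    · exact ⟨c, Or.inl hcy, not_lt.mp fun h => hcy.2 h hlt⟩
    · exact ⟨s y 0, Or.inr ⟨hy, rfl⟩, hbach a y ha hy n hlt hle⟩
  rcases hc.eq_or_lt with rfl | hc
  · exact ReflTransGen.single hcy
  · exact (ih c (hcy.lt hcof) hc ((hcy.lt hcof).le.trans hle)).tail hcy

lemma reflTransGen_stepDown_cofSeq (hcof : IsCofSys s) (hmono : IsStrictMonoCofSys s)
    (hbach : HasBachmann s) {a : A} (ha : IsLimPt a) {n m : ℕ} (hnm : n ≤ m) :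
    ReflTransGen (StepDown s) (s a n) (s a m) := by
  induction m, hnm using Nat.le_induction with
  | base => exact ReflTransGen.refl
  | succ m _ ih =>
    exact ih.trans (reflTransGen_stepDown_of_lt_of_le hcof hbach ha
      (hmono a ha m (m + 1) m.lt_succ_self) le_rfl)

lemma IsFGH.apply_le_apply_of_reflTransGen (hcof : IsCofSys s) (hmono : IsStrictMonoCofSys s)
    (hbach : HasBachmann s) {F : A → ℕ → ℕ} (hF : IsFGH s F) {x : ℕ} (hx : 1 ≤ x) {a b : A}
    (h : ReflTransGen (StepDown s) b a) : F b x ≤ F a x := by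
  induction a using WellFoundedLT.induction generalizing b with
  | _ a ih =>
  cases h with
  | refl => exact le_rfl
  | @tail c _ hbc hca =>
    refine (ih c (hca.lt hcof) hbc).trans ?_
    rcases hca with hca | ⟨ha, rfl⟩
    · obtain ⟨k, rfl⟩ := Nat.exists_eq_add_of_le' hx
      rw [hF.2.1 a c hca, Function.iterate_succ_apply]
      exact Function.id_le_iterate_of_id_le (hF.le_apply hcof c) k _
    · rw [hF.2.2 a ha x]
      exact ih _ ((hcof a ha).1 x) (reflTransGen_stepDown_cofSeq hcof hmono hbach ha x.zero_le)

end WellOrder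

theorem coherent_dom_general {A : Type*} [LinearOrder A] [WellFoundedLT A]
    (s : A → ℕ → A) (hcof : IsCofSys s) (hmono : IsStrictMonoCofSys s)
    (hbach : HasBachmann s)
    (F : A → ℕ → ℕ) (hF : IsFGH s F)
    (a b : A) (p : List ℕ) (hp : PathRho s a p b) :
    ∀ x : ℕ, pathLen p ≤ x → F b x ≤ F a x := by
  induction hp with
  | nil => exact fun _ _ => le_rfl
  | lim p v m _ hv _ ih =>
    intro x hx
    rw [pathLen_append_singleton] at hx
    calc F (s v (m - 1)) x
        ≤ F (s v x) x := hF.apply_le_apply_of_reflTransGen hcof hmono hbach (by omega)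
          (reflTransGen_stepDown_cofSeq hcof hmono hbach hv (by omega))
      _ = F v x := (hF.2.2 v hv x).symm
      _ ≤ F a x := ih x (by omega)
  | succ p v c _ hcv ih =>
    intro x hx
    rw [pathLen_append_singleton] at hx
    exact (hF.apply_le_apply_of_reflTransGen hcof hmono hbach (by omega)
      (ReflTransGen.single (Or.inl hcv))).trans (ih x (by omega))

/-- Let `(A, <)` be a strict well-order with a strictly monotone system of
cofinal sequences `s` having the Bachmann property. Suppose `b < a` and
`p ∈ Path^s_a` with `ρ^s_a(p) = b`. Then for all `x ≥ |p|`, `F^s_a(x) ≥ F^s_b(x)`. -/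
theorem coherent_dom {A : Type*} [LinearOrder A] [WellFoundedLT A]
    (s : A → ℕ → A) (hcof : IsCofSys s) (hmono : IsStrictMonoCofSys s)
    (hbach : HasBachmann s)
    (F : A → ℕ → ℕ) (hF : IsFGH s F)
    (a b : A) (hba : b < a) (p : List ℕ) (hp : PathRho s a p b) :
    ∀ x : ℕ, pathLen p ≤ x → F b x ≤ F a x :=
  coherent_dom_general s hcof hmono hbach F hF a b p hp
end

section
/- For every finite color set D and every nondeterministic finite automaton A with input alphabet D ⊔ D⁻ there exists a function f : Tp_A × Tp_A → Tp_A with the following property: for every tree T over D and vertices v1, v2, v3 of T such that v1 lies in the cone of v2 and v3 does not lie in the cone of v2, the type of the pair (v1, v3) equals f(t1, t2), where t1 is the type of (v1, v2) and t2 is the type of (v2, v3). -/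
/-- Edge relation of the reversal `R(G)` of a graph `G` with edge set `E` over
the color set `D`: colors are `D ⊕ D` (original colors `Sum.inl d` and fresh
inverse colors `Sum.inr d = d⁻`). -/
def RevEdge {V D : Type*} (E : Set (V × D × V)) : V → (D ⊕ D) → V → Prop
  | v, Sum.inl d, w => (v, d, w) ∈ E
  | v, Sum.inr d, w => (w, d, v) ∈ E

/-- `Marks E v α w`: the word `α` over `D ⊕ D⁻` marks a path from `v` to `w`
in the reversal `R(G)` of the graph with edge set `E`. -/
def Marks {V D : Type*} (E : Set (V × D × V)) : V → List (D ⊕ D) → V → Prop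
  | v, [], w => v = w
  | v, c :: α, w => ∃ u, RevEdge E v c u ∧ Marks E u α w

/-- `IsEdgePath E v l w`: the list of edges `l` forms a directed path from `v`
to `w` in the graph with edge set `E`. -/
def IsEdgePath {V D : Type*} (E : Set (V × D × V)) : V → List (V × D × V) → V → Prop
  | v, [], w => v = w
  | v, e :: l, w => e ∈ E ∧ e.1 = v ∧ IsEdgePath E e.2.2 l w

/-- A graph is a tree if it has a root from which every vertex is reachable by
a unique directed path. -/
def IsTree {V D : Type*} (E : Set (V × D × V)) : Prop :=
  ∃ r : V, ∀ v : V, ∃! l : List (V × D × V), IsEdgePath E r l v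

/-- The cone of a vertex `v`: the set of vertices reachable from `v` by a
directed path (including `v` itself). -/
def Cone {V D : Type*} (E : Set (V × D × V)) (v : V) : Set V :=
  {w | ∃ l : List (V × D × V), IsEdgePath E v l w}

/-- `AutRun Δ q α q'`: the nondeterministic finite automaton with transition
relation `Δ` can go from state `q` to state `q'` reading the word `α`. -/
def AutRun {D Q : Type*} (Δ : Set (Q × (D ⊕ D) × Q)) : Q → List (D ⊕ D) → Q → Prop
  | q, [], q' => q = q'
  | q, c :: α, q' => ∃ q'', (q, c, q'') ∈ Δ ∧ AutRun Δ q'' α q'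

/-- The automaton with transition relation `Δ` can switch from state `q1` to
state `q2` on a path from `v1` to `v2`: some word over `D ⊕ D⁻` marks a path
from `v1` to `v2` in `R(T)` and takes the automaton from `q1` to `q2`. -/
def Switch {V D Q : Type*} (E : Set (V × D × V)) (Δ : Set (Q × (D ⊕ D) × Q))
    (q1 q2 : Q) (v1 v2 : V) : Prop :=
  ∃ α : List (D ⊕ D), Marks E v1 α v2 ∧ AutRun Δ q1 α q2

/-- The vertex-pair type of `(v1, v2)`: the pair of sets of state pairs
`(q1, q2)` such that the automaton can switch from `q1` to `q2` on a path from
`v1` to `v2` (resp. from `v2` to `v1`). -/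
def pairType {V D Q : Type*} (E : Set (V × D × V)) (Δ : Set (Q × (D ⊕ D) × Q))
    (v1 v2 : V) : Set (Q × Q) × Set (Q × Q) :=
  ({q | Switch E Δ q.1 q.2 v1 v2}, {q | Switch E Δ q.1 q.2 v2 v1})


section Aux

variable {V D Q : Type*} {E : Set (V × D × V)} {Δ : Set (Q × (D ⊕ D) × Q)}

lemma isEdgePath_append {l1 l2 : List (V × D × V)} :
    ∀ {r m w : V}, IsEdgePath E r l1 m → IsEdgePath E m l2 w →
      IsEdgePath E r (l1 ++ l2) w := by
  induction l1 with
  | nil => intro r m w h1 h2; cases h1; exact h2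
  | cons e l ih =>
    intro r m w h1 h2
    obtain ⟨he, h1a, h1b⟩ := h1
    exact ⟨he, h1a, ih h1b h2⟩

lemma isEdgePath_split {l1 l2 : List (V × D × V)} :
    ∀ {r w : V}, IsEdgePath E r (l1 ++ l2) w →
      ∃ m, IsEdgePath E r l1 m ∧ IsEdgePath E m l2 w := by
  induction l1 with
  | nil => intro r w h; exact ⟨r, rfl, h⟩
  | cons e l ih =>
    intro r w h
    obtain ⟨he, ha, hb⟩ := h
    obtain ⟨m, hm1, hm2⟩ := ih hb
    exact ⟨m, ⟨he, ha, hm1⟩, hm2⟩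

lemma isEdgePath_endpoint_unique {l : List (V × D × V)} :
    ∀ {s a b : V}, IsEdgePath E s l a → IsEdgePath E s l b → a = b := by
  induction l with
  | nil => intro s a b h1 h2; cases h1; cases h2; rfl
  | cons e l ih =>
    intro s a b h1 h2
    exact ih h1.2.2 h2.2.2

lemma marks_append {α β : List (D ⊕ D)} :
    ∀ {v m w : V}, Marks E v α m → Marks E m β w → Marks E v (α ++ β) w := by
  induction α with
  | nil => intro v m w h1 h2; cases h1; exact h2
  | cons c α ih =>
    intro v m w h1 h2
    obtain ⟨u, hu, h1⟩ := h1
    exact ⟨u, hu, ih h1 h2⟩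

lemma autRun_append {α β : List (D ⊕ D)} :
    ∀ {q p q' : Q}, AutRun Δ q α p → AutRun Δ p β q' → AutRun Δ q (α ++ β) q' := by
  induction α with
  | nil => intro q p q' h1 h2; cases h1; exact h2
  | cons c α ih =>
    intro q p q' h1 h2
    obtain ⟨u, hu, h1⟩ := h1
    exact ⟨u, hu, ih h1 h2⟩

lemma autRun_split {α β : List (D ⊕ D)} :
    ∀ {q q' : Q}, AutRun Δ q (α ++ β) q' →
      ∃ p, AutRun Δ q α p ∧ AutRun Δ p β q' := by
  induction α with
  | nil => intro q q' h; exact ⟨q, rfl, h⟩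
  | cons c α ih =>
    intro q q' h
    obtain ⟨u, hu, h⟩ := h
    obtain ⟨p, hp1, hp2⟩ := ih h
    exact ⟨p, ⟨u, hu, hp1⟩, hp2⟩

section Tree

variable {r : V} (hr : ∀ v : V, ∃! l : List (V × D × V), IsEdgePath E r l v)

include hr

lemma cone_prefix {v w : V} (hw : w ∈ Cone E v) :
    (hr v).choose <+: (hr w).choose := by
  obtain ⟨l, hl⟩ := hw
  have : IsEdgePath E r ((hr v).choose ++ l) w :=
    isEdgePath_append (hr v).choose_spec.1 hl
  have he := (hr w).choose_spec.2 _ this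
  exact ⟨l, he⟩

lemma prefix_cone {v w : V} (h : (hr v).choose <+: (hr w).choose) :
    w ∈ Cone E v := by
  obtain ⟨l, hl⟩ := h
  have hw := (hr w).choose_spec.1
  rw [← hl] at hw
  obtain ⟨m, hm1, hm2⟩ := isEdgePath_split hw
  have : m = v := isEdgePath_endpoint_unique hm1 (hr v).choose_spec.1
  subst this
  exact ⟨l, hm2⟩

omit hr in
lemma edge_out_of_cone {v x y : V} {d : D} (he : (x, d, y) ∈ E)
    (hx : x ∈ Cone E v) : y ∈ Cone E v := by
  obtain ⟨l, hl⟩ := hx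
  exact ⟨l ++ [(x, d, y)],
    isEdgePath_append hl (show IsEdgePath E x [(x, d, y)] y from ⟨he, rfl, rfl⟩)⟩

lemma edge_into_cone {v x y : V} {d : D} (he : (x, d, y) ∈ E)
    (hx : x ∉ Cone E v) (hy : y ∈ Cone E v) : y = v := by
  have hpy : (hr y).choose = (hr x).choose ++ [(x, d, y)] :=
    ((hr y).choose_spec.2 _
      (isEdgePath_append (hr x).choose_spec.1
        (show IsEdgePath E x [(x, d, y)] y from ⟨he, rfl, rfl⟩))).symm
  have hpre : (hr v).choose <+: (hr y).choose := cone_prefix hr hy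
  have hnpre : ¬ (hr v).choose <+: (hr x).choose := fun h => hx (prefix_cone hr h)
  have heq : (hr v).choose = (hr y).choose := by
    rw [hpy] at hpre
    rcases hpre with ⟨t, ht⟩
    rcases t.eq_nil_or_concat with rfl | ⟨t', a, rfl⟩
    · rw [hpy, ← ht, List.append_nil]
    · exfalso
      apply hnpre
      refine ⟨t', ?_⟩
      have := congrArg (List.dropLast) ht
      simpa [← List.append_assoc] using this
  have := (hr v).choose_spec.1
  rw [heq] at this
  exact isEdgePath_endpoint_unique (hr y).choose_spec.1 this

lemma marks_cross_out {v2 : V} {α : List (D ⊕ D)} :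
    ∀ {a b : V}, Marks E a α b → a ∈ Cone E v2 → b ∉ Cone E v2 →
      ∃ β γ, α = β ++ γ ∧ Marks E a β v2 ∧ Marks E v2 γ b := by
  induction α with
  | nil =>
    intro a b h ha hb
    cases h; exact absurd ha hb
  | cons c α ih =>
    intro a b h ha hb
    obtain ⟨u, hu, hrest⟩ := h
    by_cases huc : u ∈ Cone E v2
    · obtain ⟨β, γ, heq, h1, h2⟩ := ih hrest huc hb
      exact ⟨c :: β, γ, by rw [heq]; rfl, ⟨u, hu, h1⟩, h2⟩
    · have hav : a = v2 := by
        cases c with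
        | inl d => exact absurd (edge_out_of_cone hu ha) huc
        | inr d => exact edge_into_cone hr hu huc ha
      subst hav
      exact ⟨[], c :: α, rfl, rfl, ⟨u, hu, hrest⟩⟩

lemma marks_cross_in {v2 : V} {α : List (D ⊕ D)} :
    ∀ {a b : V}, Marks E a α b → a ∉ Cone E v2 → b ∈ Cone E v2 →
      ∃ β γ, α = β ++ γ ∧ Marks E a β v2 ∧ Marks E v2 γ b := by
  induction α with
  | nil =>
    intro a b h ha hb
    cases h; exact absurd hb ha
  | cons c α ih =>
    intro a b h ha hb
    obtain ⟨u, hu, hrest⟩ := h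
    by_cases huc : u ∈ Cone E v2
    · have huv : u = v2 := by
        cases c with
        | inl d => exact edge_into_cone hr hu ha huc
        | inr d => exact absurd (edge_out_of_cone hu huc) ha
      exact ⟨[c], α, rfl, ⟨u, hu, huv⟩, huv ▸ hrest⟩
    · obtain ⟨β, γ, heq, h1, h2⟩ := ih hrest huc hb
      exact ⟨c :: β, γ, by rw [heq]; rfl, ⟨u, hu, h1⟩, h2⟩

end Tree

end Aux

/-- For every finite color set `D` and nondeterministic finite automaton with
input alphabet `D ⊕ D⁻`, there is a function `f : Tp × Tp → Tp` on vertex-pair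
types such that for every tree `T` over `D` and vertices `v1, v2, v3` with
`v1` in the cone of `v2` and `v3` not in the cone of `v2`, the type of
`(v1, v3)` equals `f` applied to the types of `(v1, v2)` and `(v2, v3)`. -/
theorem type_calculation1 {D Q : Type*} [Fintype D] [Fintype Q]
    (Δ : Set (Q × (D ⊕ D) × Q)) :
    ∃ f : (Set (Q × Q) × Set (Q × Q)) → (Set (Q × Q) × Set (Q × Q)) →
        (Set (Q × Q) × Set (Q × Q)),
      ∀ (V : Type*) (E : Set (V × D × V)), IsTree E →
        ∀ v1 v2 v3 : V, v1 ∈ Cone E v2 → v3 ∉ Cone E v2 →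
          pairType E Δ v1 v3 = f (pairType E Δ v1 v2) (pairType E Δ v2 v3) := by

  refine ⟨fun t1 t2 =>
    ({p | ∃ q, (p.1, q) ∈ t1.1 ∧ (q, p.2) ∈ t2.1},
     {p | ∃ q, (p.1, q) ∈ t2.2 ∧ (q, p.2) ∈ t1.2}), ?_⟩
  intro V E hT v1 v2 v3 h1 h3
  obtain ⟨r, hr⟩ := hT
  unfold pairType
  refine Prod.ext ?_ ?_ <;> simp only <;> ext ⟨q1, q2⟩ <;>
    simp only [Set.mem_setOf_eq] <;> constructor
  · rintro ⟨α, hm, ha⟩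
    obtain ⟨β, γ, rfl, hmb, hmg⟩ := marks_cross_out hr hm h1 h3
    obtain ⟨p, hp1, hp2⟩ := autRun_split ha
    exact ⟨p, ⟨β, hmb, hp1⟩, ⟨γ, hmg, hp2⟩⟩
  · rintro ⟨p, ⟨β, hmb, hab⟩, ⟨γ, hmg, hag⟩⟩
    exact ⟨β ++ γ, marks_append hmb hmg, autRun_append hab hag⟩
  · rintro ⟨α, hm, ha⟩
    obtain ⟨β, γ, rfl, hmb, hmg⟩ := marks_cross_in hr hm h3 h1
    obtain ⟨p, hp1, hp2⟩ := autRun_split ha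
    exact ⟨p, ⟨β, hmb, hp1⟩, ⟨γ, hmg, hp2⟩⟩
  · rintro ⟨p, ⟨β, hmb, hab⟩, ⟨γ, hmg, hag⟩⟩
    exact ⟨β ++ γ, marks_append hmb hmg, autRun_append hab hag⟩
end

section
/- In the deterministic-tree setup: for every R_c-limit point v0, the set P_{v0} is infinite. -/
/-- A graph is deterministic if for every vertex and color there is at most
one outgoing edge of that color. -/
def IsDeterministic {V D : Type*} (E : Set (V × D × V)) : Prop :=
  ∀ (v : V) (d : D) (w w' : V), (v, d, w) ∈ E → (v, d, w') ∈ E → w = w'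

/-- `v0` is a limit point of the strict (well-)order `R`: it is not the least
element and it is the supremum of the elements strictly below it. -/
def IsLimitPt {V : Type*} (R : V → V → Prop) (v0 : V) : Prop :=
  (∃ v, R v v0) ∧ ∀ v, R v v0 → ∃ w, R v w ∧ R w v0

/-- A set `B` is `R`-cofinal in `v0`: all its elements are strictly `R`-below
`v0` and `sup_R B = v0`. -/
def CofinalIn {V : Type*} (R : V → V → Prop) (B : Set V) (v0 : V) : Prop :=
  (∀ b ∈ B, R b v0) ∧ ∀ v, R v v0 → ∃ b ∈ B, (b = v ∨ R v b)

/-- `S_{v0}`: the set of vertices whose `T`-cone contains a subset cofinal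
in `v0`. -/
def Sset {V D : Type*} (E : Set (V × D × V)) (R : V → V → Prop) (v0 : V) : Set V :=
  {v | ∃ B ⊆ Cone E v, CofinalIn R B v0}

/-- `P_{v0}`: the set of vertices of `S_{v0}` whose `T`-cone does not
contain `v0`. -/
def Pset {V D : Type*} (E : Set (V × D × V)) (R : V → V → Prop) (v0 : V) : Set V :=
  {v | v ∈ Sset E R v0 ∧ v0 ∉ Cone E v}

/-!
The root lies in `S_{v0}`. If the cone of `v` contains a set `B` cofinal in `v0`, then so does
`B \ {v}`, since `v0` is a limit; this set is covered by the cones of the children of `v`, and by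
determinism there is at most one child per colour. With finitely many colours, one child's cone
already contains a cofinal part of `B`, so that child lies in `S_{v0}`. Hence `S_{v0}` has vertices
of every depth, whereas `v0` only lies in the cones of vertices of depth at most that of `v0`.
-/

open Set

section Tree

variable {V D : Type*} {E : Set (V × D × V)}

theorem IsEdgePath.append {u v w : V} {l m : List (V × D × V)}
    (hl : IsEdgePath E u l v) (hm : IsEdgePath E v m w) : IsEdgePath E u (l ++ m) w := by
  induction l generalizing u with
  | nil => cases hl; exact hm
  | cons e l ih => exact ⟨hl.1, hl.2.1, ih hl.2.2⟩

theorem IsEdgePath.single {v w : V} {d : D} (h : (v, d, w) ∈ E) :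
    IsEdgePath E v [(v, d, w)] w :=
  ⟨h, rfl, rfl⟩

theorem exists_mem_cone_child {v w : V} (hw : w ∈ Cone E v) (hne : w ≠ v) :
    ∃ d u, (v, d, u) ∈ E ∧ w ∈ Cone E u := by
  obtain ⟨_ | ⟨⟨v', d, u⟩, m⟩, hm⟩ := hw
  · exact absurd hm.symm hne
  · obtain ⟨he, rfl, hm⟩ := hm
    exact ⟨d, u, he, m, hm⟩

noncomputable def depth (E : Set (V × D × V)) (r v : V) : ℕ :=
  sInf {n | ∃ l, IsEdgePath E r l v ∧ l.length = n}

theorem depth_eq_length {r v : V} (hr : ∀ v, ∃! l, IsEdgePath E r l v)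
    {l : List (V × D × V)} (hl : IsEdgePath E r l v) : depth E r v = l.length := by
  have : {n | ∃ l, IsEdgePath E r l v ∧ l.length = n} = {l.length} := by
    ext n
    constructor
    · rintro ⟨l', hl', rfl⟩
      rw [(hr v).unique hl' hl, mem_singleton_iff]
    · rintro rfl
      exact ⟨l, hl, rfl⟩
  rw [depth, this, csInf_singleton]

theorem depth_add_length {r v w : V} (hr : ∀ v, ∃! l, IsEdgePath E r l v)
    {m : List (V × D × V)} (hm : IsEdgePath E v m w) : depth E r w = depth E r v + m.length := by
  obtain ⟨l, hl, -⟩ := hr v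
  rw [depth_eq_length hr (hl.append hm), depth_eq_length hr hl, List.length_append]

end Tree

section Cofinal

variable {α : Type*} [LinearOrder α] {v0 : α} {B : Set α}

theorem cofinalIn_iff : CofinalIn (· < ·) B v0 ↔ B ⊆ Iio v0 ∧ ∀ x < v0, ∃ b ∈ B, x ≤ b := by
  refine and_congr Iff.rfl (forall₂_congr fun x _ => exists_congr fun b => and_congr_right' ?_)
  rw [le_iff_eq_or_lt, eq_comm]

theorem CofinalIn.exists_ge (hB : CofinalIn (· < ·) B v0) {x : α} (hx : x < v0) :
    ∃ b ∈ B, x ≤ b :=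
  (cofinalIn_iff.1 hB).2 x hx

theorem CofinalIn.exists_gt (hlim : IsLimitPt (· < ·) v0) (hB : CofinalIn (· < ·) B v0)
    {x : α} (hx : x < v0) : ∃ b ∈ B, x < b := by
  obtain ⟨w, hxw, hw⟩ := hlim.2 x hx
  obtain ⟨b, hb, hwb⟩ := hB.exists_ge hw
  exact ⟨b, hb, hxw.trans_le hwb⟩

theorem CofinalIn.diff_singleton (hlim : IsLimitPt (· < ·) v0) (hB : CofinalIn (· < ·) B v0)
    (v : α) : CofinalIn (· < ·) (B \ {v}) v0 := by
  refine cofinalIn_iff.2 ⟨fun b hb => hB.1 b hb.1, fun x hx => ?_⟩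
  obtain ⟨b, hb, hxb⟩ := hB.exists_gt hlim hx
  by_cases hbv : b = v
  · obtain ⟨b', hb', hbb'⟩ := hB.exists_gt hlim (hB.1 b hb)
    exact ⟨b', ⟨hb', (hbv ▸ hbb').ne'⟩, (hxb.trans hbb').le⟩
  · exact ⟨b, ⟨hb, hbv⟩, hxb.le⟩

theorem CofinalIn.exists_inter_of_subset_iUnion {ι : Type*} [Finite ι] (hne : ∃ x, x < v0)
    (hB : CofinalIn (· < ·) B v0) {C : ι → Set α} (hcover : B ⊆ ⋃ i, C i) :
    ∃ i, CofinalIn (· < ·) (B ∩ C i) v0 := by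
  by_contra! hnot
  have hbound : ∀ i, ∃ u < v0, ∀ b ∈ B ∩ C i, b < u := by
    intro i
    have := hnot i
    rw [cofinalIn_iff] at this
    push Not at this
    exact this fun b hb => hB.1 b hb.1
  choose u hu0 hu using hbound
  obtain ⟨x, hx⟩ := hne
  obtain ⟨b0, hb0, -⟩ := hB.exists_ge hx
  have : Nonempty ι := ⟨(mem_iUnion.1 (hcover hb0)).choose⟩
  obtain ⟨imax, himax⟩ := Finite.exists_max u
  obtain ⟨b, hb, hub⟩ := hB.exists_ge (hu0 imax)
  obtain ⟨i, hi⟩ := mem_iUnion.1 (hcover hb)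
  exact (hu i b ⟨hb, hi⟩).not_ge ((himax i).trans hub)

end Cofinal

section Sset

variable {V D : Type*} [LinearOrder V] {E : Set (V × D × V)} {v0 : V}

theorem exists_child_mem_Sset [Finite D] (hdet : IsDeterministic E)
    (hlim : IsLimitPt (· < ·) v0) {v : V} (hv : v ∈ Sset E (· < ·) v0) :
    ∃ d w, (v, d, w) ∈ E ∧ w ∈ Sset E (· < ·) v0 := by
  obtain ⟨B, hBv, hB⟩ := hv
  let C : D → Set V := fun d => {x | ∃ w, (v, d, w) ∈ E ∧ x ∈ Cone E w}
  have hcover : B \ {v} ⊆ ⋃ d, C d := fun x hx => by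
    obtain ⟨d, w, hw, hx⟩ := exists_mem_cone_child (hBv hx.1) hx.2
    exact mem_iUnion.2 ⟨d, w, hw, hx⟩
  obtain ⟨d, hd⟩ := (hB.diff_singleton hlim v).exists_inter_of_subset_iUnion hlim.1 hcover
  obtain ⟨x, hx⟩ := hlim.1
  obtain ⟨b, ⟨-, w, hw, -⟩, -⟩ := hd.exists_ge hx
  refine ⟨d, w, hw, _, ?_, hd⟩
  rintro y ⟨-, w', hw', hy⟩
  exact hdet v d w' w hw' hw ▸ hy

theorem exists_mem_Sset_le_depth [Finite D] {r : V} (hr : ∀ v, ∃! l, IsEdgePath E r l v)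
    (hdet : IsDeterministic E) (hlim : IsLimitPt (· < ·) v0) (n : ℕ) :
    ∃ v ∈ Sset E (· < ·) v0, n ≤ depth E r v := by
  induction n with
  | zero =>
    refine ⟨r, ⟨Iio v0, fun v _ => (hr v).exists, ?_⟩, Nat.zero_le _⟩
    exact cofinalIn_iff.2 ⟨subset_rfl, fun x hx => ⟨x, hx, le_rfl⟩⟩
  | succ n ih =>
    obtain ⟨v, hv, hn⟩ := ih
    obtain ⟨d, w, hw, hwS⟩ := exists_child_mem_Sset hdet hlim hv
    refine ⟨w, hwS, ?_⟩
    rw [depth_add_length hr (IsEdgePath.single hw)]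
    simpa using hn

theorem Pset_infinite_of_linearOrder [Finite D] (hTree : IsTree E) (hdet : IsDeterministic E)
    (hlim : IsLimitPt (· < ·) v0) : (Pset E (· < ·) v0).Infinite := by
  obtain ⟨r, hr⟩ := hTree
  refine Infinite.of_image (depth E r) (infinite_of_forall_exists_gt fun n => ?_)
  obtain ⟨v, hv, hn⟩ := exists_mem_Sset_le_depth hr hdet hlim (n + depth E r v0 + 1)
  refine ⟨depth E r v, ⟨v, ⟨hv, fun ⟨m, hm⟩ => ?_⟩, rfl⟩, by omega⟩
  have := depth_add_length hr hm
  omega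

end Sset

theorem Pset_infinite_general {V D Q : Type*} [Fintype D]
    (E : Set (V × D × V)) (hTree : IsTree E) (hdet : IsDeterministic E)
    (Δ : Set (Q × (D ⊕ D) × Q)) (qI qc : Q)
    (hwo : IsWellOrder V (Switch E Δ qI qc))
    (v0 : V) (hlim : IsLimitPt (Switch E Δ qI qc) v0) :
    (Pset E (Switch E Δ qI qc) v0).Infinite := by
  classical
  -- its `<` is `Switch E Δ qI qc` by definition
  let _ : LinearOrder V := linearOrderOfSTO (Switch E Δ qI qc)
  exact Pset_infinite_of_linearOrder hTree hdet hlim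

/-- Deterministic-tree setup: `T` is a deterministic tree over a finite color
set `D`, `B` is a nondeterministic finite automaton over `D ⊕ D⁻` with
distinguished states `qI, qc`, and the relation
`R_c v1 v2 := B can switch from qI to qc on a path from v1 to v2 in R(T)`
is a strict well-order on the vertices. Then for every `R_c`-limit point `v0`
the set `P_{v0}` is infinite. -/
theorem Pset_infinite {V D Q : Type*} [Fintype D] [Fintype Q]
    (E : Set (V × D × V)) (hTree : IsTree E) (hdet : IsDeterministic E)
    (Δ : Set (Q × (D ⊕ D) × Q)) (qI qc : Q)
    (hwo : IsWellOrder V (Switch E Δ qI qc))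
    (v0 : V) (hlim : IsLimitPt (Switch E Δ qI qc) v0) :
    (Pset E (Switch E Δ qI qc) v0).Infinite :=
  Pset_infinite_general E hTree hdet Δ qI qc hwo v0 hlim
end

section
/- Let (A, <) be a strict well-order with a strictly monotone system of cofinal sequences s having the Bachmann property. Then s is Schmidt-coherent: for every x ∈ A^lim and every n ∈ ℕ, s(x,n) ≺^s s(x,n+1), where ≺^s is the step-down relation. -/
theorem stepdown_key {A : Type*} [LinearOrder A] [WellFoundedLT A]
    (s : A → ℕ → A) (hcof : IsCofSys s) :
    ∀ a : A, ∀ b, b < a → (∀ y, IsLimPt y → b < y → y ≤ a → b ≤ s y 0) →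
      Relation.TransGen (StepDown s) b a := by
  intro a
  induction a using WellFoundedLT.induction with
  | ind a IH =>
    intro b hba hcond
    by_cases hlim : IsLimPt a
    · have h0 : s a 0 < a := (hcof a hlim).1 0
      have hb0 : b ≤ s a 0 := hcond a hlim hba le_rfl
      have step : StepDown s (s a 0) a := Or.inr ⟨hlim, rfl⟩
      rcases eq_or_lt_of_le hb0 with rfl | hlt
      · exact Relation.TransGen.single step
      · exact (IH _ h0 b hlt (fun y hy h1 h2 => hcond y hy h1 (h2.trans h0.le))).tail step
    · have hc : ∃ y, y < a ∧ ¬∃ z, y < z ∧ z < a := by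
        by_contra h
        push_neg at h
        exact hlim ⟨⟨b, hba⟩, fun y hy => h y hy⟩
      obtain ⟨c, hc, hnc⟩ := hc
      have hcov : c ⋖ a := ⟨hc, fun z hz1 hz2 => hnc ⟨z, hz1, hz2⟩⟩
      have step : StepDown s c a := Or.inl hcov
      have hbc : b ≤ c := by
        by_contra h
        push_neg at h
        exact hnc ⟨b, h, hba⟩
      rcases eq_or_lt_of_le hbc with rfl | hlt
      · exact Relation.TransGen.single step
      · exact (IH _ hc b hlt (fun y hy h1 h2 => hcond y hy h1 (h2.trans hc.le))).tail step

/-- A strictly monotone system of cofinal sequences with the Bachmann property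
is Schmidt-coherent: `s(x,n) ≺^s s(x,n+1)` for every nonzero limit point `x`
and every `n`, where `≺^s` is the step-down relation (the transitive closure
of the one-step step-down relation). -/
theorem bachmann_schmidt_coherent {A : Type*} [LinearOrder A] [WellFoundedLT A]
    (s : A → ℕ → A) (hcof : IsCofSys s) (hmono : IsStrictMonoCofSys s)
    (hbach : HasBachmann s) :
    ∀ x, IsLimPt x → ∀ n : ℕ,
      Relation.TransGen (StepDown s) (s x n) (s x (n + 1)) := by
  intro x hx n
  exact stepdown_key s hcof _ _ (hmono x hx n (n+1) (Nat.lt_succ_self n))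
    (fun y hy h1 h2 => hbach x y hx hy n h1 h2)
end

section
/- Let (A, <) be a strict well-order with a strictly monotone system of cofinal sequences s having the Bachmann property. If d ≺^s c (d is step-down reachable from c), then F^s_c(y) ≥ F^s_d(y) for every natural number y ≥ 1. -/
section Aux

variable {A : Type*} [LinearOrder A] [WellFoundedLT A]

private lemma le_iterate_aux (f : ℕ → ℕ) (h : ∀ z, z ≤ f z) :
    ∀ k x, x ≤ f^[k] x := by
  intro k
  induction k with
  | zero => intro x; simp
  | succ k ih =>
      intro x
      rw [Function.iterate_succ_apply]
      exact (h x).trans (ih (f x))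

omit [WellFoundedLT A] in
private lemma succ_or_lim (v : A) (hv : ∃ y, y < v) :
    (∃ b, b ⋖ v) ∨ IsLimPt v := by
  by_cases h : IsLimPt v
  · exact Or.inr h
  · left
    unfold IsLimPt at h
    push_neg at h
    obtain ⟨y, hy, hy2⟩ := h hv
    exact ⟨y, hy, fun c hc1 hc2 => absurd hc2 (not_lt.mpr (hy2 c hc1))⟩

private lemma fgh_ge (s : A → ℕ → A) (hcof : IsCofSys s)
    (F : A → ℕ → ℕ) (hF : IsFGH s F) : ∀ a : A, ∀ x : ℕ, x ≤ F a x := by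
  intro a
  induction a using WellFoundedLT.induction with
  | _ a IH =>
    intro x
    by_cases hmin : IsMin a
    · rw [hF.1 a hmin x]; omega
    · have hex : ∃ y, y < a := by
        rw [not_isMin_iff] at hmin; exact hmin
      rcases succ_or_lim a hex with ⟨b, hb⟩ | hlim
      · rw [hF.2.1 a b hb x]
        exact le_iterate_aux (F b) (IH b hb.lt) x x
      · rw [hF.2.2 a hlim x]
        exact IH (s a x) ((hcof a hlim).1 x) x

omit [WellFoundedLT A] in
private lemma stepDown_lt (s : A → ℕ → A) (hcof : IsCofSys s) {b a : A}
    (h : StepDown s b a) : b < a := by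
  rcases h with h | ⟨hlim, rfl⟩
  · exact h.lt
  · exact (hcof a hlim).1 0

private lemma reach_aux (s : A → ℕ → A) (hcof : IsCofSys s) (hbach : HasBachmann s) :
    ∀ v : A, ∀ a : A, ∀ n : ℕ, IsLimPt a → s a n < v → v ≤ s a (n + 1) →
      Relation.TransGen (StepDown s) (s a n) v := by
  intro v
  induction v using WellFoundedLT.induction with
  | _ v IH =>
    intro a n ha h1 h2
    rcases succ_or_lim v ⟨s a n, h1⟩ with ⟨b, hb⟩ | hlimv
    · have hub : s a n ≤ b := by
        by_contra h
        exact (hb.2 (not_le.mp h) h1).elim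
      rcases eq_or_lt_of_le hub with rfl | hlt
      · exact Relation.TransGen.single (Or.inl hb)
      · exact (IH b hb.lt a n ha hlt (hb.lt.le.trans h2)).tail (Or.inl hb)
    · have hub : s a n ≤ s v 0 := hbach a v ha hlimv n h1 h2
      have hsv : s v 0 < v := (hcof v hlimv).1 0
      rcases eq_or_lt_of_le hub with heq | hlt
      · exact Relation.TransGen.single (Or.inr ⟨hlimv, heq⟩)
      · exact (IH (s v 0) hsv a n ha hlt (hsv.le.trans h2)).tail (Or.inr ⟨hlimv, rfl⟩)

private lemma reach_succ (s : A → ℕ → A) (hcof : IsCofSys s)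
    (hmono : IsStrictMonoCofSys s) (hbach : HasBachmann s)
    {a : A} (ha : IsLimPt a) (n : ℕ) :
    Relation.TransGen (StepDown s) (s a n) (s a (n + 1)) :=
  reach_aux s hcof hbach (s a (n + 1)) a n ha (hmono a ha n (n + 1) (Nat.lt_succ_self n)) le_rfl

end Aux

/-- If `d` is step-down reachable from `c` (for a strictly monotone system of
cofinal sequences `s` with the Bachmann property on a strict well-order),
then `F^s_c(y) ≥ F^s_d(y)` for every natural number `y ≥ 1`. -/
theorem fgh_mono_stepDown {A : Type*} [LinearOrder A] [WellFoundedLT A]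
    (s : A → ℕ → A) (hcof : IsCofSys s) (hmono : IsStrictMonoCofSys s)
    (hbach : HasBachmann s)
    (F : A → ℕ → ℕ) (hF : IsFGH s F)
    (d c : A) (hdc : Relation.TransGen (StepDown s) d c) :
    ∀ y : ℕ, 1 ≤ y → F d y ≤ F c y := by
  suffices H : ∀ c : A, ∀ d : A, Relation.TransGen (StepDown s) d c →
      ∀ y : ℕ, 1 ≤ y → F d y ≤ F c y from fun y hy => H c d hdc y hy
  intro c
  induction c using WellFoundedLT.induction with
  | _ c IH =>
    intro d hdc y hy
    have single : ∀ m : A, StepDown s m c → F m y ≤ F c y := by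
      intro m hm
      rcases hm with hcov | ⟨hlim, rfl⟩
      · rw [hF.2.1 c m hcov y]
        obtain ⟨k, rfl⟩ : ∃ k, y = k + 1 := ⟨y - 1, by omega⟩
        rw [Function.iterate_succ_apply]
        exact le_iterate_aux (F m) (fun z => fgh_ge s hcof F hF m z) k (F m (k + 1))
      · rw [hF.2.2 c hlim y]
        have key : ∀ k : ℕ, F (s c 0) y ≤ F (s c k) y := by
          intro k
          induction k with
          | zero => exact le_rfl
          | succ k ih =>
              exact ih.trans (IH (s c (k + 1)) ((hcof c hlim).1 (k + 1)) (s c k)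
                (reach_succ s hcof hmono hbach hlim k) y hy)
        exact key y
    cases hdc with
    | single h => exact single d h
    | tail hdm hmc =>
        exact (IH _ (stepDown_lt s hcof hmc) _ hdm y hy).trans (single _ hmc)
end

section
/- Let (A, <) be a strict well-order with a system of cofinal sequences s. For every a ∈ A and every b < a there exists a path code p ∈ Path^s_a such that ρ^s_a(p) = b. -/
/-- For a strict well-order `(A, <)` with a system of cofinal sequences `s`,
every `b < a` is the endpoint of some path code from `a`. -/
theorem path_exists {A : Type*} [LinearOrder A] [WellFoundedLT A]
    (s : A → ℕ → A) (hcof : IsCofSys s) :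
    ∀ a b : A, b < a → ∃ p : List ℕ, PathRho s a p b := by
  have htrans : ∀ (a v : A) (p : List ℕ), PathRho s a p v →
      ∀ (q : List ℕ) (w : A), PathRho s v q w → PathRho s a (p ++ q) w := by
    intro a v p hp q w hq
    induction hq with
    | nil => simpa using hp
    | lim q' v' m h hl hm ih =>
        rw [← List.append_assoc]
        exact PathRho.lim _ _ _ ih hl hm
    | succ q' v' b h hcov ih =>
        rw [← List.append_assoc]
        exact PathRho.succ _ _ _ ih hcov
  intro a
  induction a using WellFoundedLT.induction with
  | _ a ih =>
    intro b hb
    by_cases hlim : IsLimPt a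
    · obtain ⟨n, hn⟩ := (hcof a hlim).2 b hb
      have hs : s a n < a := (hcof a hlim).1 n
      obtain ⟨p, hp⟩ := ih (s a n) hs b hn
      have h1 : PathRho s a [n + 1] (s a (n + 1 - 1)) :=
        PathRho.lim [] a (n + 1) PathRho.nil hlim (Nat.le_add_left 1 n)
      simp only [Nat.add_sub_cancel] at h1
      exact ⟨[n + 1] ++ p, htrans a (s a n) [n + 1] h1 p b hp⟩
    · unfold IsLimPt at hlim
      push_neg at hlim
      obtain ⟨c, hca, hc⟩ := hlim ⟨b, hb⟩
      have hcov : c ⋖ a := ⟨hca, fun z hz => (hc z hz).not_gt⟩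
      have hbc : b ≤ c := by
        by_contra h
        exact absurd hb (hc b (not_le.mp h)).not_gt
      have h0 : PathRho s a [0] c := PathRho.succ [] a c PathRho.nil hcov
      rcases eq_or_lt_of_le hbc with rfl | hlt
      · exact ⟨[0], h0⟩
      · obtain ⟨p, hp⟩ := ih c hca b hlt
        exact ⟨[0] ++ p, htrans a c [0] h0 p b hp⟩
end

section
/- Let (A, <) be a strict well-order with a strictly monotone system of cofinal sequences s having the Bachmann property, and let b < a in A. Then there exists a path code p* ∈ Path^s_a with ρ^s_a(p*) = b such that every path code p ∈ Path^s_a with ρ^s_a(p) = b visits every point visited by p* (i.e. for every prefix q of p* there is a prefix q' of p with ρ^s_a(q') = ρ^s_a(q)); consequently |p*| ≤ |p| for every such p, so p* has the least |·| among all path codes from a ending at b. -/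
section Aux

variable {A : Type*} [LinearOrder A] {s : A → ℕ → A} {a : A}

lemma covBy_unique {b c v : A} (h1 : b ⋖ v) (h2 : c ⋖ v) : b = c :=
  le_antisymm (le_of_not_gt fun h => h2.2 h h1.1) (le_of_not_gt fun h => h1.2 h h2.1)

lemma covby_not_lim {c v : A} (h : c ⋖ v) : ¬ IsLimPt v := by
  intro hl
  obtain ⟨z, h1, h2⟩ := hl.2 c h.1
  exact h.2 h1 h2

lemma exists_covby_or_lim {b v : A} (hb : b < v) : (∃ c, c ⋖ v) ∨ IsLimPt v := by
  by_cases h : ∃ c, c ⋖ v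
  · exact .inl h
  · right
    refine ⟨⟨b, hb⟩, fun y hy => ?_⟩
    by_contra hz
    push_neg at hz
    exact h ⟨y, hy, fun c h1 h2 => absurd h2 (not_lt.mpr (hz c h1))⟩

lemma mono_le (hmono : IsStrictMonoCofSys s) {v : A} (hv : IsLimPt v) {i j : ℕ}
    (hij : i ≤ j) : s v i ≤ s v j := by
  rcases hij.lt_or_eq with h | rfl
  · exact (hmono v hv i j h).le
  · exact le_rfl

lemma pathRho_inv {p : List ℕ} {v : A} (h : PathRho s a p v) :
    (p = [] ∧ v = a) ∨
    (∃ q m w, p = q ++ [m] ∧ PathRho s a q w ∧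
      ((m = 0 ∧ v ⋖ w) ∨ (IsLimPt w ∧ 1 ≤ m ∧ v = s w (m - 1)))) := by
  cases h with
  | nil => exact Or.inl ⟨rfl, rfl⟩
  | lim p v m hp hl hm => exact Or.inr ⟨p, m, v, rfl, hp, Or.inr ⟨hl, hm, rfl⟩⟩
  | succ p v b hp hc => exact Or.inr ⟨p, 0, v, rfl, hp, Or.inl ⟨rfl, hc⟩⟩

lemma pathRho_nil_inv {v : A} (h : PathRho s a [] v) : v = a := by
  rcases pathRho_inv h with ⟨_, rfl⟩ | ⟨q, m, w, heq, _, _⟩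
  · rfl
  · exact absurd heq (by simp)

lemma pathRho_snoc_inv {p : List ℕ} {m : ℕ} {w : A} (h : PathRho s a (p ++ [m]) w) :
    ∃ v, PathRho s a p v ∧
      ((m = 0 ∧ w ⋖ v) ∨ (IsLimPt v ∧ 1 ≤ m ∧ w = s v (m - 1))) := by
  rcases pathRho_inv h with ⟨h1, _⟩ | ⟨q, m', w', heq, hq, hc⟩
  · exact absurd h1 (by simp)
  · obtain ⟨h1, h2⟩ := List.append_inj' heq rfl
    subst h1
    obtain rfl : m = m' := by simpa using h2
    exact ⟨w', hq, hc⟩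

lemma pathRho_append {v w : A} {p r : List ℕ} (h1 : PathRho s a p v)
    (h2 : PathRho s v r w) : PathRho s a (p ++ r) w := by
  induction h2 with
  | nil => simpa using h1
  | lim q u m hq hl hm ih =>
      have := PathRho.lim (p ++ q) u m ih hl hm
      simpa using this
  | succ q u c hq hc ih =>
      have := PathRho.succ (p ++ q) u c ih hc
      simpa using this

lemma pathRho_decomp {p : List ℕ} {w : A} (h : PathRho s a p w) :
    ∀ q r, p = q ++ r → ∃ v, PathRho s a q v ∧ PathRho s v r w := by
  induction h with
  | nil =>
      intro q r hqr
      obtain ⟨rfl, rfl⟩ := List.append_eq_nil_iff.mp hqr.symm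
      exact ⟨a, .nil, .nil⟩
  | lim p v m hp hl hm ih =>
      intro q r hqr
      rcases List.eq_nil_or_concat r with rfl | ⟨r', m', rfl⟩
      · refine ⟨s v (m - 1), ?_, .nil⟩
        rw [List.append_nil] at hqr
        rw [← hqr]
        exact .lim p v m hp hl hm
      · simp only [List.concat_eq_append] at hqr ⊢
        rw [← List.append_assoc] at hqr
        obtain ⟨h1, h2⟩ := List.append_inj' hqr rfl
        obtain rfl : m = m' := by simpa using h2
        obtain ⟨v₀, hq, hr'⟩ := ih q r' h1
        exact ⟨v₀, hq, .lim r' v m hr' hl hm⟩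
  | succ p v c hp hc ih =>
      intro q r hqr
      rcases List.eq_nil_or_concat r with rfl | ⟨r', m', rfl⟩
      · refine ⟨c, ?_, .nil⟩
        rw [List.append_nil] at hqr
        rw [← hqr]
        exact .succ p v c hp hc
      · simp only [List.concat_eq_append] at hqr ⊢
        rw [← List.append_assoc] at hqr
        obtain ⟨h1, h2⟩ := List.append_inj' hqr rfl
        obtain rfl : (0 : ℕ) = m' := by simpa using h2
        obtain ⟨v₀, hq, hr'⟩ := ih q r' h1
        exact ⟨v₀, hq, .succ r' v c hr' hc⟩

lemma pathRho_cons_inv {k : ℕ} {r : List ℕ} {w : A} (h : PathRho s a (k :: r) w) :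
    ∃ u, PathRho s a [k] u ∧ PathRho s u r w :=
  pathRho_decomp h [k] r rfl

lemma pathRho_single_inv {k : ℕ} {u : A} (h : PathRho s a [k] u) :
    (k = 0 ∧ u ⋖ a) ∨ (IsLimPt a ∧ 1 ≤ k ∧ u = s a (k - 1)) := by
  have h' : PathRho s a ([] ++ [k]) u := by simpa using h
  obtain ⟨v, hv, hc⟩ := pathRho_snoc_inv h'
  obtain rfl : v = a := pathRho_nil_inv hv
  exact hc

lemma pathRho_unique {p : List ℕ} {v v' : A} (h1 : PathRho s a p v)
    (h2 : PathRho s a p v') : v = v' := by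
  induction p using List.reverseRecOn generalizing v v' with
  | nil => rw [pathRho_nil_inv h1, pathRho_nil_inv h2]
  | append_singleton p m ih =>
      obtain ⟨w1, hw1, hc1⟩ := pathRho_snoc_inv h1
      obtain ⟨w2, hw2, hc2⟩ := pathRho_snoc_inv h2
      obtain rfl : w1 = w2 := ih hw1 hw2
      rcases hc1 with ⟨rfl, hco1⟩ | ⟨hl1, hm1, rfl⟩ <;>
        rcases hc2 with ⟨h0, hco2⟩ | ⟨hl2, hm2, rfl⟩
      · exact covBy_unique hco1 hco2
      · exact absurd hl2 (covby_not_lim hco1)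
      · exact absurd hl1 (covby_not_lim hco2)
      · rfl

lemma pathRho_lt (hcof : IsCofSys s) {p : List ℕ} {v : A} (h : PathRho s a p v)
    (hp : p ≠ []) : v < a := by
  induction h with
  | nil => exact absurd rfl hp
  | lim p u m hp' hl hm ih =>
      have h1 : s u (m - 1) < u := (hcof u hl).1 _
      rcases eq_or_ne p [] with rfl | hne
      · obtain rfl : u = a := pathRho_nil_inv hp'
        exact h1
      · exact h1.trans (ih hne)
  | succ p u c hp' hc ih =>
      rcases eq_or_ne p [] with rfl | hne
      · obtain rfl : u = a := pathRho_nil_inv hp'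
        exact hc.1
      · exact hc.1.trans (ih hne)

lemma pathRho_le (hcof : IsCofSys s) {p : List ℕ} {v : A} (h : PathRho s a p v) :
    v ≤ a := by
  rcases eq_or_ne p [] with rfl | h'
  · exact (pathRho_nil_inv h).le
  · exact (pathRho_lt hcof h h').le

lemma prefix_cons_cases {q : List ℕ} {x : ℕ} {l : List ℕ} (h : q <+: x :: l) :
    q = [] ∨ ∃ q₀, q = x :: q₀ ∧ q₀ <+: l := by
  cases q with
  | nil => exact .inl rfl
  | cons y ys =>
      obtain ⟨t, ht⟩ := h
      rw [List.cons_append] at ht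
      injection ht with h1 h2
      exact .inr ⟨ys, by rw [h1], ⟨t, h2⟩⟩

lemma cons_prefix {q₀ l : List ℕ} {x : ℕ} (h : q₀ <+: l) : x :: q₀ <+: x :: l := by
  obtain ⟨t, rfl⟩ := h
  exact ⟨t, rfl⟩

lemma pathLen_cons (x : ℕ) (l : List ℕ) : pathLen (x :: l) = x + 1 + pathLen l := by
  simp [pathLen]; omega

lemma pathLen_append (p q : List ℕ) : pathLen (p ++ q) = pathLen p + pathLen q := by
  simp [pathLen]; omega

end Aux

section Main

variable {A : Type*} [LinearOrder A] [WellFoundedLT A] {s : A → ℕ → A}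

lemma bachmann_visit (hcof : IsCofSys s) (hmono : IsStrictMonoCofSys s)
    (hbach : HasBachmann s) {v b : A} (hv : IsLimPt v) (n : ℕ) (hb : b ≤ s v n) :
    ∀ y : A, s v n < y → (∃ j, y ≤ s v j) → ∀ r, PathRho s y r b →
      ∃ r₁ r₂, r = r₁ ++ r₂ ∧ PathRho s y r₁ (s v n) ∧ PathRho s (s v n) r₂ b := by
  intro y₀
  refine (IsWellFounded.wf (r := ((· < ·) : A → A → Prop))).induction
    (C := fun y => s v n < y → (∃ j, y ≤ s v j) → ∀ r, PathRho s y r b →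
      ∃ r₁ r₂, r = r₁ ++ r₂ ∧ PathRho s y r₁ (s v n) ∧ PathRho s (s v n) r₂ b)
    y₀ ?_
  intro y IH hy hj r hr
  classical
  have hby : b < y := lt_of_le_of_lt hb hy
  cases r with
  | nil => exact absurd (pathRho_nil_inv hr) hby.ne
  | cons k tail =>
    obtain ⟨u, hu1, hu2⟩ := pathRho_cons_inv hr
    rcases pathRho_single_inv hu1 with ⟨rfl, hcov⟩ | ⟨hylim, hk, hu⟩
    · -- u ⋖ y
      have hnu : s v n ≤ u := by
        by_contra h
        push_neg at h
        exact hcov.2 h hy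
      rcases hnu.lt_or_eq with hlt | heq
      · obtain ⟨r₁, r₂, rfl, ha, hb2⟩ :=
          IH u hcov.1 hlt (hj.imp fun j hyj => hcov.1.le.trans hyj) tail hu2
        exact ⟨0 :: r₁, r₂, rfl, pathRho_append hu1 ha, hb2⟩
      · refine ⟨[0], tail, rfl, ?_, ?_⟩
        · rw [heq]; exact hu1
        · rw [heq]; exact hu2
    · -- y is a limit, u = s y (k-1)
      obtain ⟨j₁, h1, h2⟩ : ∃ j₁, s v j₁ < y ∧ y ≤ s v (j₁ + 1) := by
        have hj₀ := Nat.find_spec hj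
        have hpos : Nat.find hj ≠ 0 := by
          intro h0
          rw [h0] at hj₀
          exact absurd (hy.trans_le hj₀) (not_lt.mpr (mono_le hmono hv (Nat.zero_le n)))
        refine ⟨Nat.find hj - 1, not_le.mp (Nat.find_min hj (by omega)), ?_⟩
        have : Nat.find hj - 1 + 1 = Nat.find hj := by omega
        rw [this]; exact hj₀
      have hnj : n ≤ j₁ := by
        by_contra h
        push_neg at h
        have hle : s v (j₁ + 1) ≤ s v n := mono_le hmono hv (by omega)
        exact absurd (h2.trans hle) (not_le.mpr hy)
      have hb0 : s v j₁ ≤ s y 0 := hbach v y hv hylim j₁ h1 h2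
      have hnu : s v n ≤ u := by
        rw [hu]
        exact (mono_le hmono hv hnj).trans (hb0.trans (mono_le hmono hylim (Nat.zero_le _)))
      rcases hnu.lt_or_eq with hlt | heq
      · have hult : u < y := by rw [hu]; exact (hcof y hylim).1 _
        obtain ⟨r₁, r₂, rfl, ha, hb2⟩ :=
          IH u hult hlt ⟨j₁ + 1, hult.le.trans h2⟩ tail hu2
        exact ⟨k :: r₁, r₂, rfl, pathRho_append hu1 ha, hb2⟩
      · refine ⟨[k], tail, rfl, ?_, ?_⟩
        · rw [heq]; exact hu1
        · rw [heq]; exact hu2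


lemma least_path_main (hcof : IsCofSys s) (hmono : IsStrictMonoCofSys s)
    (hbach : HasBachmann s) (b : A) :
    ∀ a : A, b < a → ∃ pstar : List ℕ, PathRho s a pstar b ∧
      ∀ p : List ℕ, PathRho s a p b →
        (∀ q : List ℕ, q <+: pstar → ∀ v : A, PathRho s a q v →
          ∃ q' : List ℕ, q' <+: p ∧ PathRho s a q' v) ∧
        pathLen pstar ≤ pathLen p := by
  intro a₀
  refine (IsWellFounded.wf (r := ((· < ·) : A → A → Prop))).induction
    (C := fun a => b < a → ∃ pstar : List ℕ, PathRho s a pstar b ∧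
      ∀ p : List ℕ, PathRho s a p b →
        (∀ q : List ℕ, q <+: pstar → ∀ v : A, PathRho s a q v →
          ∃ q' : List ℕ, q' <+: p ∧ PathRho s a q' v) ∧
        pathLen pstar ≤ pathLen p)
    a₀ ?_
  clear a₀
  intro a IH hba
  classical
  rcases exists_covby_or_lim hba with ⟨c, hc⟩ | hlim
  · -- a is a successor of c
    have hbc : b ≤ c := by
      by_contra h
      push_neg at h
      exact hc.2 h hba
    have hdec : ∀ p, PathRho s a p b → ∃ tail, p = 0 :: tail ∧ PathRho s c tail b := by
      intro p hp
      cases p with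
      | nil => exact absurd (pathRho_nil_inv hp) hba.ne
      | cons k tail =>
        obtain ⟨u, hu1, hu2⟩ := pathRho_cons_inv hp
        rcases pathRho_single_inv hu1 with ⟨rfl, hcov⟩ | ⟨hal, _, _⟩
        · obtain rfl : u = c := covBy_unique hcov hc
          exact ⟨tail, rfl, hu2⟩
        · exact absurd hal (covby_not_lim hc)
    have hstep : PathRho s a [0] c := by simpa using PathRho.succ [] a c .nil hc
    rcases hbc.lt_or_eq with hlt | rfl
    · -- b < c
      obtain ⟨p₀, h₀, hmin₀⟩ := IH c hc.1 hlt
      refine ⟨0 :: p₀, pathRho_append hstep h₀, ?_⟩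
      intro p hp
      obtain ⟨tail, rfl, htail⟩ := hdec p hp
      obtain ⟨hvis, hlen⟩ := hmin₀ tail htail
      constructor
      · intro q hq u hqu
        rcases prefix_cons_cases hq with rfl | ⟨q₀, rfl, hq₀⟩
        · obtain rfl : u = a := pathRho_nil_inv hqu
          exact ⟨[], List.nil_prefix, .nil⟩
        · obtain ⟨u₁, hu1, hu2⟩ := pathRho_cons_inv hqu
          obtain rfl : u₁ = c := by
            rcases pathRho_single_inv hu1 with ⟨_, hcov⟩ | ⟨hal, _, _⟩
            · exact covBy_unique hcov hc
            · exact absurd hal (covby_not_lim hc)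
          obtain ⟨q', hq', hq'2⟩ := hvis q₀ hq₀ u hu2
          exact ⟨0 :: q', cons_prefix hq', pathRho_append hstep hq'2⟩
      · rw [pathLen_cons, pathLen_cons]
        omega
    · -- b = c
      refine ⟨[0], hstep, ?_⟩
      intro p hp
      obtain ⟨tail, rfl, htail⟩ := hdec p hp
      obtain rfl : tail = [] := by
        by_contra h
        exact absurd (pathRho_lt hcof htail h) (lt_irrefl b)
      exact ⟨fun q hq u hqu => ⟨q, hq, hqu⟩, le_refl _⟩
  · -- a is a limit
    have hex : ∃ n, b ≤ s a n := ((hcof a hlim).2 b hba).imp fun n h => h.le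
    obtain ⟨n, hwn, hminn⟩ : ∃ n, b ≤ s a n ∧ ∀ m, m < n → s a m < b :=
      ⟨Nat.find hex, Nat.find_spec hex, fun m hm => not_le.mp (Nat.find_min hex hm)⟩
    have hstep : PathRho s a [n + 1] (s a n) := by
      simpa using PathRho.lim [] a (n + 1) .nil hlim (by omega)
    have hdec : ∀ p, PathRho s a p b →
        ∃ k tail, p = (k + 1) :: tail ∧ n ≤ k ∧ PathRho s (s a k) tail b := by
      intro p hp
      cases p with
      | nil => exact absurd (pathRho_nil_inv hp) hba.ne
      | cons k tail =>
        obtain ⟨u, hu1, hu2⟩ := pathRho_cons_inv hp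
        rcases pathRho_single_inv hu1 with ⟨_, hcov⟩ | ⟨_, hk, hu⟩
        · exact absurd hlim (covby_not_lim hcov)
        · subst hu
          have hbu : b ≤ s a (k - 1) := pathRho_le hcof hu2
          have hkn : n ≤ k - 1 := by
            by_contra h
            push_neg at h
            exact absurd hbu (not_le.mpr (hminn _ h))
          refine ⟨k - 1, tail, ?_, hkn, hu2⟩
          congr 1
          omega
    rcases hwn.lt_or_eq with hlt | heq
    · -- b < s a n
      obtain ⟨p₀, h₀, hmin₀⟩ := IH (s a n) ((hcof a hlim).1 n) hlt
      refine ⟨(n + 1) :: p₀, pathRho_append hstep h₀, ?_⟩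
      intro p hp
      obtain ⟨k, tail, rfl, hkn, htail⟩ := hdec p hp
      obtain ⟨r₁, r₂, rfl, hr₁, hr₂⟩ : ∃ r₁ r₂, tail = r₁ ++ r₂ ∧
          PathRho s (s a k) r₁ (s a n) ∧ PathRho s (s a n) r₂ b := by
        rcases eq_or_lt_of_le hkn with rfl | hlt'
        · exact ⟨[], tail, rfl, .nil, htail⟩
        · exact bachmann_visit hcof hmono hbach hlim n hwn (s a k)
            (hmono a hlim n k hlt') ⟨k, le_refl _⟩ tail htail
      have hstep' : PathRho s a [k + 1] (s a k) := by
        simpa using PathRho.lim [] a (k + 1) .nil hlim (by omega)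
      obtain ⟨hvis, hlen⟩ := hmin₀ r₂ hr₂
      constructor
      · intro q hq u hqu
        rcases prefix_cons_cases hq with rfl | ⟨q₀, rfl, hq₀⟩
        · obtain rfl : u = a := pathRho_nil_inv hqu
          exact ⟨[], List.nil_prefix, .nil⟩
        · obtain ⟨u₁, hu1, hu2⟩ := pathRho_cons_inv hqu
          obtain rfl : u₁ = s a n := by
            rcases pathRho_single_inv hu1 with ⟨h0, _⟩ | ⟨_, _, hu⟩
            · exact absurd h0 (by omega)
            · rw [hu]; norm_num
          obtain ⟨q', hq', hq'2⟩ := hvis q₀ hq₀ u hu2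
          refine ⟨(k + 1) :: (r₁ ++ q'), ?_, ?_⟩
          · obtain ⟨t, rfl⟩ := hq'
            exact ⟨t, by simp⟩
          · exact pathRho_append (pathRho_append hstep' hr₁) hq'2
      · rw [pathLen_cons, pathLen_cons, pathLen_append]
        omega
    · -- b = s a n
      have hstep' : PathRho s a [n + 1] b := by rw [heq]; exact hstep
      refine ⟨[n + 1], hstep', ?_⟩
      intro p hp
      obtain ⟨k, tail, rfl, hkn, htail⟩ := hdec p hp
      constructor
      · intro q hq u hqu
        rcases prefix_cons_cases hq with rfl | ⟨q₀, rfl, hq₀⟩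
        · obtain rfl : u = a := pathRho_nil_inv hqu
          exact ⟨[], List.nil_prefix, .nil⟩
        · obtain rfl : q₀ = [] := List.prefix_nil.mp hq₀
          obtain rfl : u = b := pathRho_unique hqu hstep'
          exact ⟨(k + 1) :: tail, List.prefix_refl _, hp⟩
      · rw [pathLen_cons, pathLen_cons]
        simp [pathLen]
        omega

end Main

/-- For a strictly monotone system of cofinal sequences with the Bachmann
property on a strict well-order, and `b < a`, there is a path code `p*` from
`a` to `b` such that every path code from `a` to `b` visits every point visited
by `p*`; consequently `|p*| ≤ |p|` for every path code `p` from `a` to `b`,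
i.e. `p*` has the least norm. -/
theorem least_path_exists {A : Type*} [LinearOrder A] [WellFoundedLT A]
    (s : A → ℕ → A) (hcof : IsCofSys s) (hmono : IsStrictMonoCofSys s)
    (hbach : HasBachmann s)
    (a b : A) (hba : b < a) :
    ∃ pstar : List ℕ, PathRho s a pstar b ∧
      ∀ p : List ℕ, PathRho s a p b →
        (∀ q : List ℕ, q <+: pstar → ∀ v : A, PathRho s a q v →
          ∃ q' : List ℕ, q' <+: p ∧ PathRho s a q' v) ∧
        pathLen pstar ≤ pathLen p :=
  least_path_main hcof hmono hbach b a hba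
end

section
/- Let (A, <) be a strict well-order with a strictly monotone system of cofinal sequences s having the Bachmann property. If a, b ∈ A^lim and n, m ≥ 1 are natural numbers with s(a, n) = s(b, m), then a = b. (Consequently every element of A is a non-initial member of the cofinal sequence of at most one limit point.) -/
lemma cofSeq_aux {A : Type*} [LinearOrder A]
    (s : A → ℕ → A) (hcof : IsCofSys s) (hmono : IsStrictMonoCofSys s)
    (hbach : HasBachmann s)
    (a b : A) (ha : IsLimPt a) (hb : IsLimPt b)
    (n m : ℕ) (hn : 1 ≤ n) (heq : s a n = s b m) (hab : a < b) : False := by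
  have hsbm_lt_a : s b m < a := heq ▸ (hcof a ha).1 n
  obtain ⟨n', hn'⟩ := (hcof b hb).2 a hab
  have hP : ∃ k, m ≤ k ∧ a ≤ s b (k + 1) := by
    refine ⟨max m n', le_max_left _ _, le_of_lt (lt_of_lt_of_le hn' ?_)⟩
    exact le_of_lt (hmono b hb n' (max m n' + 1) (Nat.lt_succ_of_le (le_max_right _ _)))
  classical
  set k := Nat.find hP with hkdef
  obtain ⟨hmk, hak⟩ := Nat.find_spec hP
  have hsbk_lt_a : s b k < a := by
    rcases eq_or_lt_of_le hmk with h | h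
    · rw [hkdef, ← h]; exact hsbm_lt_a
    · have := Nat.find_min hP (m := k - 1) (by omega)
      push_neg at this
      have h2 := this (by omega)
      rwa [show k - 1 + 1 = k by omega] at h2
  have hb0 : s b k ≤ s a 0 := hbach b a hb ha k hsbk_lt_a hak
  have hmle : s b m ≤ s b k := by
    rcases eq_or_lt_of_le hmk with h | h
    · rw [hkdef, ← h]
    · exact le_of_lt (hmono b hb m k h)
  have : s a 0 < s a n := hmono a ha 0 n hn
  rw [heq] at this
  exact absurd (lt_of_le_of_lt (hmle.trans hb0) this) (lt_irrefl _)

/-- For a strictly monotone system of cofinal sequences `s` with the Bachmann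
property on a strict well-order: if `a, b` are nonzero limit points and
`n, m ≥ 1` with `s(a,n) = s(b,m)`, then `a = b`. -/
theorem cofSeq_noninitial_unique {A : Type*} [LinearOrder A] [WellFoundedLT A]
    (s : A → ℕ → A) (hcof : IsCofSys s) (hmono : IsStrictMonoCofSys s)
    (hbach : HasBachmann s)
    (a b : A) (ha : IsLimPt a) (hb : IsLimPt b)
    (n m : ℕ) (hn : 1 ≤ n) (hm : 1 ≤ m) (heq : s a n = s b m) :
    a = b := by
  rcases lt_trichotomy a b with h | h | h
  · exact absurd (cofSeq_aux s hcof hmono hbach a b ha hb n m hn heq h) not_false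
  · exact h
  · exact absurd (cofSeq_aux s hcof hmono hbach b a hb ha m n hm heq.symm h) not_false
end

section
/- The standard system of cofinal sequences s_st is a strictly monotone system of cofinal sequences on the ordinals below ω^ω: for every nonzero limit ordinal β < ω^ω and all natural numbers n < k, one has s_st(β, n) < β, s_st(β, n) < s_st(β, k), and sup{s_st(β, n) : n ∈ ℕ} = β. -/
/-!
Every nonzero limit `β < ω ^ ω` has the form `ω ^ (m + 1) * (γ + 1)`: take `m + 1` to be the largest
natural exponent with `ω ^ (m + 1) ∣ β`. Then `β = a + b * ω` with `a = ω ^ (m + 1) * γ` and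
`b = ω ^ m > 0`, while `s_st(β, n) = a + b * n`; all three claims follow from normality of
`x ↦ a + b * x` and `⨆ n, (n : Ordinal) = ω`.
-/

open Ordinal
open scoped Classical

/-- The standard system of cofinal sequences on the ordinals below `ω^ω`:
if `β = ω^(m+1) * (γ+1)` (such a representation exists and is unique for every
nonzero limit ordinal `β < ω^ω`) then `s_st(β, n) = ω^(m+1)*γ + ω^m*n`;
on ordinals without such a representation the value is irrelevant (set to `0`). -/
noncomputable def sst (β : Ordinal) (n : ℕ) : Ordinal :=
  if h : ∃ p : ℕ × Ordinal, β = omega0 ^ ((p.1 : Ordinal) + 1) * (p.2 + 1) then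
    omega0 ^ ((h.choose.1 : Ordinal) + 1) * h.choose.2 +
      omega0 ^ (h.choose.1 : Ordinal) * n
  else 0

namespace Ordinal

theorem exists_lt_omega0_opow_natCast {β : Ordinal} (hβ : β < ω ^ ω) :
    ∃ N : ℕ, β < ω ^ (N : Ordinal) := by
  obtain ⟨c, hc, hβc⟩ := (lt_opow_of_isSuccLimit omega0_ne_zero isSuccLimit_omega0).1 hβ
  obtain ⟨N, rfl⟩ := lt_omega0.1 hc
  exact ⟨N, hβc⟩

theorem exists_eq_omega0_opow_mul_add_one {β : Ordinal} (hβ0 : β ≠ 0) (hβ : β < ω ^ ω) :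
    ∃ (m : ℕ) (γ : Ordinal), β = ω ^ (m : Ordinal) * (γ + 1) := by
  have hex : ∃ N : ℕ, ¬ ω ^ ((N : Ordinal) + 1) ∣ β := by
    obtain ⟨N, hN⟩ := exists_lt_omega0_opow_natCast hβ
    refine ⟨N, fun hdvd => (le_of_dvd hβ0 hdvd).not_gt (hN.trans ?_)⟩
    exact (opow_lt_opow_iff_right one_lt_omega0).2 (lt_add_one _)
  obtain ⟨m, hm, hmin⟩ : ∃ m : ℕ, ¬ ω ^ ((m : Ordinal) + 1) ∣ β ∧
      ∀ j < m, ω ^ ((j : Ordinal) + 1) ∣ β :=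
    ⟨Nat.find hex, Nat.find_spec hex, fun j hj => not_not.1 (Nat.find_min hex hj)⟩
  have hdvd : ω ^ (m : Ordinal) ∣ β := by
    cases m with
    | zero => simp
    | succ j => simpa using hmin j j.lt_succ_self
  obtain ⟨δ, rfl⟩ := hdvd
  rcases zero_or_succ_or_isSuccLimit δ with hδ | ⟨γ, hγ⟩ | hδ
  · simp [hδ] at hβ0
  · exact ⟨m, γ, by rw [← hγ, Order.succ_eq_add_one]⟩
  -- a limit cofactor `δ` would be divisible by `ω`, making `ω ^ (m + 1) ∣ β`
  · obtain ⟨ε, rfl⟩ := isSuccPrelimit_iff_omega0_dvd.1 hδ.isSuccPrelimit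
    refine absurd ⟨ε, ?_⟩ hm
    rw [← mul_assoc, ← opow_add_one]

theorem exists_eq_omega0_opow_add_one_mul_add_one {β : Ordinal} (hβ : β < ω ^ ω)
    (hlim : Order.IsSuccLimit β) :
    ∃ (m : ℕ) (γ : Ordinal), β = ω ^ ((m : Ordinal) + 1) * (γ + 1) := by
  obtain ⟨m, γ, rfl⟩ := exists_eq_omega0_opow_mul_add_one hlim.ne_bot hβ
  rcases m with _ | m
  · simp [Order.not_isSuccLimit_add_one] at hlim
  · exact ⟨m, γ, by push_cast; rfl⟩

theorem omega0_opow_add_one_mul_add_one (m γ : Ordinal) :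
    ω ^ (m + 1) * (γ + 1) = ω ^ (m + 1) * γ + ω ^ m * ω := by
  rw [mul_add_one, opow_add_one]

theorem add_mul_natCast_lt_add_mul_omega0 (a : Ordinal) {b : Ordinal} (hb : 0 < b) (n : ℕ) :
    a + b * n < a + b * ω :=
  add_lt_add_right ((isNormal_mul_right hb).strictMono (natCast_lt_omega0 n)) a

theorem strictMono_add_mul_natCast (a : Ordinal) {b : Ordinal} (hb : 0 < b) :
    StrictMono fun n : ℕ => a + b * n :=
  fun _ _ hnk => add_lt_add_right ((isNormal_mul_right hb).strictMono (by exact_mod_cast hnk)) a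

theorem iSup_add_mul_natCast (a b : Ordinal) : ⨆ n : ℕ, a + b * n = a + b * ω := by
  rw [← iSup_mul_natCast, add_iSup]

end Ordinal

/-- Stated existentially: no uniqueness of the representation chosen by `sst` is needed. -/
theorem sst_spec {β γ : Ordinal} {m : ℕ} (hβ : β = ω ^ ((m : Ordinal) + 1) * (γ + 1)) :
    ∃ (m' : ℕ) (γ' : Ordinal), β = ω ^ ((m' : Ordinal) + 1) * (γ' + 1) ∧
      ∀ n : ℕ, sst β n = ω ^ ((m' : Ordinal) + 1) * γ' + ω ^ (m' : Ordinal) * n :=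
  have h : ∃ p : ℕ × Ordinal, β = ω ^ ((p.1 : Ordinal) + 1) * (p.2 + 1) := ⟨(m, γ), hβ⟩
  ⟨h.choose.1, h.choose.2, h.choose_spec, fun _ => dif_pos h⟩

/-- `s_st` is a strictly monotone system of cofinal sequences on the ordinals
below `ω^ω`: for every nonzero limit ordinal `β < ω^ω` and all naturals
`n < k`: `s_st(β,n) < β`, `s_st(β,n) < s_st(β,k)`, and `sup_n s_st(β,n) = β`. -/
theorem sst_isCofSys (β : Ordinal) (hβ : β < omega0 ^ omega0) (hlim : Order.IsSuccLimit β)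
    (n k : ℕ) (hnk : n < k) :
    sst β n < β ∧ sst β n < sst β k ∧ (⨆ m : ℕ, sst β m) = β := by
  obtain ⟨_, _, hβγ⟩ := exists_eq_omega0_opow_add_one_mul_add_one hβ hlim
  obtain ⟨m, γ, hβ, hsst⟩ := sst_spec hβγ
  have hb : 0 < ω ^ (m : Ordinal) := opow_pos _ omega0_pos
  simp only [hsst]
  rw [hβ, omega0_opow_add_one_mul_add_one]
  exact ⟨add_mul_natCast_lt_add_mul_omega0 _ hb n, strictMono_add_mul_natCast _ hb hnk,
    iSup_add_mul_natCast _ _⟩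
end

section
/- For every natural number n and every ordinal γ: γ is of the form α + ω^(n+1) for some ordinal α if and only if γ is a limit point of A_n but not a limit point of the class of limit points of A_n, where A_n is the class of ordinals of the form α + ω^n. -/
open Ordinal

/-- An ordinal `γ` is a limit point of a set `S` of ordinals if `γ ≠ 0` and
`sup {δ ∈ S | δ < γ} = γ`. -/
def IsLimitPointOf (S : Set Ordinal) (γ : Ordinal) : Prop :=
  γ ≠ 0 ∧ sSup {δ | δ ∈ S ∧ δ < γ} = γ

/-- The set `A_n` of ordinals of the form `α + ω^n`. -/
def Aset (n : ℕ) : Set Ordinal := {γ | ∃ α : Ordinal, γ = α + omega0 ^ (n : Ordinal)}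

/-!
Write `u = ω^n`. Since `ω^n` absorbs every smaller ordinal on the left, `A_n` is the set of
successor multiples `u * (a + 1)`, and the limit points of that set are the multiples `u * l`
with `l` a limit ordinal, i.e. the nonzero multiples of `ω^(n+1) = u * ω`. These split into the
successor multiples of `ω^(n+1)`, which form `A_(n+1)`, and the limit multiples, which are
limit points of `A_(n+1)`. Hence the limit points of the limit points of `A_n` are those of
`A_(n+1)`, and `A_(n+1)` consists precisely of the nonzero multiples of `ω^(n+1)` that are not
limit multiples.
-/

theorem isLimitPointOf_iff {S : Set Ordinal} {γ : Ordinal} :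
    IsLimitPointOf S γ ↔ γ ≠ 0 ∧ ∀ β < γ, ∃ δ ∈ S, β < δ ∧ δ < γ := by
  have hbdd : BddAbove {δ | δ ∈ S ∧ δ < γ} := ⟨γ, fun δ hδ => hδ.2.le⟩
  have hle : sSup {δ | δ ∈ S ∧ δ < γ} ≤ γ := csSup_le' fun δ hδ => hδ.2.le
  refine and_congr_right fun _ => ⟨fun h β hβ => ?_, fun h => ?_⟩
  · obtain ⟨δ, ⟨hδS, hδγ⟩, hβδ⟩ := (lt_csSup_iff' hbdd).1 (h ▸ hβ)
    exact ⟨δ, hδS, hβδ, hδγ⟩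
  · refine hle.antisymm (le_of_forall_lt fun β hβ => (lt_csSup_iff' hbdd).2 ?_)
    obtain ⟨δ, hδS, hβδ, hδγ⟩ := h β hβ
    exact ⟨δ, ⟨hδS, hδγ⟩, hβδ⟩

theorem isLimitPointOf_iff_of_subset_of_subset_union {S T : Set Ordinal} {γ : Ordinal}
    (hST : S ⊆ T) (hTS : T ⊆ S ∪ {δ | IsLimitPointOf S δ}) :
    IsLimitPointOf T γ ↔ IsLimitPointOf S γ := by
  simp only [isLimitPointOf_iff]
  refine and_congr_right fun _ => forall₂_congr fun β _ => ⟨?_, ?_⟩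
  · rintro ⟨δ, hδT, hβδ, hδγ⟩
    rcases hTS hδT with hδS | hδ
    · exact ⟨δ, hδS, hβδ, hδγ⟩
    · obtain ⟨δ', hδ'S, hβδ', hδ'δ⟩ := (isLimitPointOf_iff.1 hδ).2 β hβδ
      exact ⟨δ', hδ'S, hβδ', hδ'δ.trans hδγ⟩
  · rintro ⟨δ, hδS, hδ⟩
    exact ⟨δ, hST hδS, hδ⟩

theorem isSuccLimit_iff_exists_omega0_mul {l : Ordinal} :
    Order.IsSuccLimit l ↔ ∃ q ≠ 0, l = ω * q := by
  rw [Ordinal.isSuccLimit_iff, isSuccPrelimit_iff_omega0_dvd]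
  constructor
  · rintro ⟨hl, q, rfl⟩
    exact ⟨q, right_ne_zero_of_mul hl, rfl⟩
  · rintro ⟨q, hq, rfl⟩
    exact ⟨mul_ne_zero omega0_ne_zero hq, dvd_mul_right ω q⟩

def succMultiples (u : Ordinal) : Set Ordinal := Set.range fun a => u * Order.succ a

theorem mem_succMultiples_omega0_opow_iff (e γ : Ordinal) :
    γ ∈ succMultiples (ω ^ e) ↔ ∃ α, γ = α + ω ^ e := by
  constructor
  · rintro ⟨a, rfl⟩
    exact ⟨ω ^ e * a, mul_succ _ _⟩
  · rintro ⟨α, rfl⟩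
    refine ⟨α / ω ^ e, (mul_succ _ _).trans ?_⟩
    conv_rhs => rw [← div_add_mod α (ω ^ e)]
    rw [add_assoc, add_omega0_opow (mod_lt α (opow_pos e omega0_pos).ne')]

theorem Aset_eq_succMultiples (n : ℕ) : Aset n = succMultiples (ω ^ (n : Ordinal)) :=
  Set.ext fun γ => (mem_succMultiples_omega0_opow_iff _ γ).symm

section succMultiples

variable {u γ : Ordinal}

theorem exists_ne_zero_mul_eq_iff :
    (∃ q ≠ 0, γ = u * q) ↔ γ ∈ succMultiples u ∨ ∃ l, Order.IsSuccLimit l ∧ γ = u * l := by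
  constructor
  · rintro ⟨q, hq, rfl⟩
    rcases zero_or_succ_or_isSuccLimit q with rfl | ⟨p, rfl⟩ | hl
    · exact absurd rfl hq
    · exact Or.inl ⟨p, rfl⟩
    · exact Or.inr ⟨q, hl, rfl⟩
  · rintro (⟨a, rfl⟩ | ⟨l, hl, rfl⟩)
    · exact ⟨_, Order.succ_ne_bot a, rfl⟩
    · exact ⟨l, hl.pos.ne', rfl⟩

theorem not_exists_isSuccLimit_mul_eq (hu : 0 < u) (hγ : γ ∈ succMultiples u) :
    ¬∃ l, Order.IsSuccLimit l ∧ γ = u * l := by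
  rintro ⟨l, hl, hγl⟩
  obtain ⟨a, rfl⟩ := hγ
  rw [← (strictMono_mul_left_of_pos hu).injective hγl] at hl
  exact Order.not_isSuccLimit_succ a hl

theorem mul_succ_le_of_mul_lt (hu : 0 < u) {c x : Ordinal} (h : u * c < u * x) :
    u * Order.succ c ≤ u * x :=
  (mul_le_mul_iff_right₀ hu).2 (Order.succ_le_of_lt ((mul_lt_mul_iff_right₀ hu).1 h))

/-- No successor multiple of `u` lies strictly between `u * c` and `u * (c + 1)`. -/
theorem not_isLimitPointOf_succMultiples (hu : 0 < u) {c : Ordinal} (hc : u * c < γ)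
    (hγ : γ ≤ u * Order.succ c) : ¬IsLimitPointOf (succMultiples u) γ := by
  intro hlim
  obtain ⟨_, ⟨a, rfl⟩, hca, haγ⟩ := (isLimitPointOf_iff.1 hlim).2 _ hc
  exact ((mul_succ_le_of_mul_lt hu hca).trans_lt haγ).not_ge hγ

theorem isLimitPointOf_succMultiples_iff (hu : 0 < u) :
    IsLimitPointOf (succMultiples u) γ ↔ ∃ l, Order.IsSuccLimit l ∧ γ = u * l := by
  constructor
  · intro hlim
    have hγ : u * (γ / u) = γ := (mul_div_le γ u).eq_or_lt.resolve_right fun hlt =>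
      not_isLimitPointOf_succMultiples hu hlt (lt_mul_succ_div γ hu.ne').le hlim
    rw [← hγ] at hlim ⊢
    rcases zero_or_succ_or_isSuccLimit (γ / u) with hq | ⟨p, hp⟩ | hq
    · exact absurd (by rw [hq, mul_zero]) hlim.1
    · rw [← hp] at hlim
      exact absurd hlim (not_isLimitPointOf_succMultiples hu
        ((mul_lt_mul_iff_right₀ hu).2 (Order.lt_succ p)) le_rfl)
    · exact ⟨_, hq, rfl⟩
  · rintro ⟨l, hl, rfl⟩
    refine isLimitPointOf_iff.2 ⟨(mul_pos hu hl.pos).ne', fun β hβ => ?_⟩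
    obtain ⟨a, ha, hβa⟩ := (lt_mul_iff_of_isSuccLimit hl).1 hβ
    exact ⟨u * Order.succ a, ⟨a, rfl⟩,
      hβa.trans ((mul_lt_mul_iff_right₀ hu).2 (Order.lt_succ a)),
      (mul_lt_mul_iff_right₀ hu).2 (hl.succ_lt ha)⟩

end succMultiples

theorem isLimitPointOf_Aset_iff (n : ℕ) (γ : Ordinal) :
    IsLimitPointOf (Aset n) γ ↔ ∃ q ≠ 0, γ = ω ^ ((n : Ordinal) + 1) * q := by
  simp only [Aset_eq_succMultiples, isLimitPointOf_succMultiples_iff (opow_pos _ omega0_pos),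
    isSuccLimit_iff_exists_omega0_mul, opow_add, opow_one]
  constructor
  · rintro ⟨_, ⟨q, hq, rfl⟩, rfl⟩
    exact ⟨q, hq, (mul_assoc _ _ _).symm⟩
  · rintro ⟨q, hq, rfl⟩
    exact ⟨ω * q, ⟨q, hq, rfl⟩, mul_assoc _ _ _⟩

theorem isLimitPointOf_limitPoints_Aset_iff (n : ℕ) (γ : Ordinal) :
    IsLimitPointOf {δ | IsLimitPointOf (Aset n) δ} γ ↔ IsLimitPointOf (Aset (n + 1)) γ := by
  have hb : 0 < ω ^ ((n : Ordinal) + 1) := opow_pos _ omega0_pos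
  rw [Aset_eq_succMultiples (n + 1), Nat.cast_add_one]
  refine isLimitPointOf_iff_of_subset_of_subset_union (fun δ hδ => ?_) fun δ hδ => ?_
  · exact (isLimitPointOf_Aset_iff n δ).2 (exists_ne_zero_mul_eq_iff.2 (Or.inl hδ))
  · exact (exists_ne_zero_mul_eq_iff.1 ((isLimitPointOf_Aset_iff n δ).1 hδ)).imp_right
      (isLimitPointOf_succMultiples_iff hb).2

/-- For every natural `n` and ordinal `γ`: `γ` has the form `α + ω^(n+1)`
iff `γ` is a limit point of `A_n` but not a limit point of the set of
limit points of `A_n`, where `A_n = {α + ω^n : α an ordinal}`. -/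
theorem form_iff_limitPoint (n : ℕ) (γ : Ordinal) :
    (∃ α : Ordinal, γ = α + omega0 ^ ((n : Ordinal) + 1)) ↔
      (IsLimitPointOf (Aset n) γ ∧
        ¬ IsLimitPointOf {δ | IsLimitPointOf (Aset n) δ} γ) := by
  have hb : 0 < ω ^ ((n : Ordinal) + 1) := opow_pos _ omega0_pos
  rw [← mem_succMultiples_omega0_opow_iff, isLimitPointOf_Aset_iff, exists_ne_zero_mul_eq_iff,
    isLimitPointOf_limitPoints_Aset_iff, Aset_eq_succMultiples, Nat.cast_add_one,
    isLimitPointOf_succMultiples_iff hb]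
  exact ⟨fun h => ⟨Or.inl h, not_exists_isSuccLimit_mul_eq hb h⟩,
    fun h => h.1.resolve_right h.2⟩
end
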